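/- Let a be an element of a unital ring having a (generalized) Drazin inverse. If a^d denotes its g-Drazin inverse, then for the 2×2 anti-triangular matrix M = [[a, 1], [0, 0]] over the ring, M has a g-Drazin inverse given by M^d = [[a^d, (a^d)^2], [0, 0]], i.e. P = [[a^2, a], [0, 0]] satisfies P^d = [[(a^d)^2, (a^d)^3], [0, 0]] and P^π = [[a^π, −a^d], [0, 1]]. -/

import Mathlib

open Filter Topology

/-- An element of a normed ring is quasinilpotent if `‖a^n‖^(1/n) → 0`. -/
def IsQuasinilpotent {A : Type*} [NormedRing A] (a : A) : Prop :=
  Filter.Tendsto (fun n : ℕ => ‖a ^ n‖ ^ ((1 : ℝ) / n)) Filter.atTop (nhds 0)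

/-- `b` is a generalized Drazin inverse of `a`. -/
def IsGDrazinInverse {A : Type*} [NormedRing A] (a b : A) : Prop :=
  a * b = b * a ∧ b * a * b = b ∧ IsQuasinilpotent (a - a ^ 2 * b)

attribute [local instance] Matrix.linftyOpNormedRing

/-!
Write `π = 1 - a aᵈ`. For `M = [[a, 1], [0, 0]]` and `B = [[aᵈ, (aᵈ)²], [0, 0]]` one finds
`M B = B M = [[a aᵈ, aᵈ], [0, 0]]` and `M - M² B = [[q, π], [0, 0]]` with `q = a - a² aᵈ`.
A matrix `N = [[q, p], [0, 0]]` satisfies `N^(n+1) = diag(qⁿ) N`, so `‖N^(n+1)‖ ≤ ‖N‖ ‖qⁿ‖`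
and `N` inherits quasinilpotency from `q`. The claims about `P` follow since `P = M²` and squaring
preserves g-Drazin inverses: `a aᵈ` is an idempotent commuting with `a`, whence
`a² - a⁴ (aᵈ)² = a² π = (a π)² = (a - a² aᵈ)²`, and `1 - P B² = 1 - M B`.
-/

namespace IsQuasinilpotent

variable {R S : Type*} [NormedRing R] [NormedRing S]

theorem sq {x : R} (hx : IsQuasinilpotent x) : IsQuasinilpotent (x ^ 2) := by
  have hsub : Tendsto (fun n : ℕ => 2 * n) atTop atTop :=
    (strictMono_mul_left_of_pos two_pos).tendsto_atTop
  have h2 : Tendsto (fun n : ℕ => (‖x ^ (2 * n)‖ ^ ((1 : ℝ) / (2 * n : ℕ))) ^ 2)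
      atTop (𝓝 0) := by
    simpa using (hx.comp hsub).pow 2
  refine h2.congr fun n => ?_
  rw [← pow_mul, ← Real.rpow_natCast, ← Real.rpow_mul (norm_nonneg _)]
  congr 1
  push_cast
  ring

theorem of_norm_pow_succ_le {x : S} {y : R} (hy : IsQuasinilpotent y) (C : ℝ)
    (hC : ∀ n : ℕ, ‖x ^ (n + 1)‖ ≤ C * ‖y ^ n‖) : IsQuasinilpotent x := by
  -- a positive base, so that its roots of order `n + 1` tend to `1`
  set K := max C 1
  have hK : 0 < K := lt_max_of_lt_right one_pos
  have hK_root : Tendsto (fun n : ℕ => K ^ ((1 : ℝ) / (n + 1))) atTop (𝓝 1) := by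
    simpa using tendsto_const_nhds.rpow tendsto_one_div_add_atTop_nhds_zero_nat (Or.inl hK.ne')
  have hy_root : Tendsto (fun n : ℕ => (‖y ^ n‖ ^ ((1 : ℝ) / n)) ^ ((n : ℝ) / (n + 1)))
      atTop (𝓝 0) := by
    simpa using hy.rpow (tendsto_natCast_div_add_atTop (1 : ℝ)) (Or.inr one_pos)
  have hbound : Tendsto (fun n : ℕ =>
      K ^ ((1 : ℝ) / (n + 1)) * (‖y ^ n‖ ^ ((1 : ℝ) / n)) ^ ((n : ℝ) / (n + 1)))
      atTop (𝓝 0) := by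
    simpa using hK_root.mul hy_root
  unfold IsQuasinilpotent
  rw [← tendsto_add_atTop_iff_nat 1]
  refine squeeze_zero' (.of_forall fun n => by positivity) ?_ hbound
  filter_upwards [eventually_ne_atTop 0] with n hn
  calc ‖x ^ (n + 1)‖ ^ ((1 : ℝ) / ((n + 1 : ℕ) : ℝ))
      ≤ (K * ‖y ^ n‖) ^ ((1 : ℝ) / (n + 1)) := by
        push_cast
        exact Real.rpow_le_rpow (norm_nonneg _)
          ((hC n).trans (mul_le_mul_of_nonneg_right (le_max_left _ _) (norm_nonneg _)))
          (by positivity)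
    _ = K ^ ((1 : ℝ) / (n + 1)) * (‖y ^ n‖ ^ ((1 : ℝ) / n)) ^ ((n : ℝ) / (n + 1)) := by
        rw [Real.mul_rpow hK.le (norm_nonneg _), ← Real.rpow_mul (norm_nonneg _)]
        congr 2
        field_simp

end IsQuasinilpotent

theorem Matrix.pow_succ_of_fin_two_bottom_zero {R : Type*} [Semiring R] (q p : R) (n : ℕ) :
    (!![q, p; 0, 0] : Matrix (Fin 2) (Fin 2) R) ^ (n + 1)
      = Matrix.diagonal (fun _ => q ^ n) * !![q, p; 0, 0] := by
  induction n with
  | zero => simp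
  | succ n ih =>
    have hsq : (!![q, p; 0, 0] : Matrix (Fin 2) (Fin 2) R) * !![q, p; 0, 0]
        = Matrix.diagonal (fun _ => q) * !![q, p; 0, 0] := by
      ext i j; fin_cases i <;> fin_cases j <;> simp [Matrix.mul_apply]
    rw [pow_succ, ih, mul_assoc, hsq, ← mul_assoc, Matrix.diagonal_mul_diagonal, ← pow_succ]

namespace IsGDrazinInverse

variable {R : Type*} [NormedRing R] {a b : R}

theorem isIdempotentElem_mul (h : IsGDrazinInverse a b) : IsIdempotentElem (a * b) := by
  rw [IsIdempotentElem, mul_assoc, ← mul_assoc b, h.2.1]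

theorem sq_mul_sq (h : IsGDrazinInverse a b) : a ^ 2 * b ^ 2 = a * b := by
  rw [← (show Commute a b from h.1).mul_pow, h.isIdempotentElem_mul.pow_succ_eq]

theorem sq (h : IsGDrazinInverse a b) : IsGDrazinInverse (a ^ 2) (b ^ 2) := by
  have hc : Commute a b := h.1
  refine ⟨(hc.pow_pow 2 2).eq, ?_, ?_⟩
  · have hba : IsIdempotentElem (b * a) := h.1 ▸ h.isIdempotentElem_mul
    rw [← hc.symm.mul_pow, hba.pow_succ_eq, pow_two b, ← mul_assoc, h.2.1, ← pow_two]
  · have hπ : IsIdempotentElem (1 - a * b) := h.isIdempotentElem_mul.one_sub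
    have hcπ : Commute a (1 - a * b) :=
      (Commute.one_right a).sub_right ((Commute.refl a).mul_right hc)
    have hsq : a ^ 2 - (a ^ 2) ^ 2 * b ^ 2 = (a - a ^ 2 * b) ^ 2 :=
      calc a ^ 2 - (a ^ 2) ^ 2 * b ^ 2 = a ^ 2 * (1 - a * b) := by
            rw [pow_two (a ^ 2), mul_assoc, h.sq_mul_sq, mul_sub, mul_one]
        _ = a ^ 2 * (1 - a * b) ^ 2 := by rw [hπ.pow_eq two_ne_zero]
        _ = (a * (1 - a * b)) ^ 2 := (hcπ.mul_pow 2).symm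
        _ = (a - a ^ 2 * b) ^ 2 := by rw [mul_sub, mul_one, ← mul_assoc, ← pow_two]
    rw [hsq]
    exact h.2.2.sq

theorem fin_two_anti_triangular_mul (h : IsGDrazinInverse a b) :
    (!![a, 1; 0, 0] : Matrix (Fin 2) (Fin 2) R) * !![b, b ^ 2; 0, 0] = !![a * b, b; 0, 0] := by
  rw [Matrix.mul_fin_two, pow_two, ← mul_assoc, h.1, h.2.1]
  simp only [mul_zero, zero_mul, add_zero]

theorem fin_two_anti_triangular (h : IsGDrazinInverse a b) :
    IsGDrazinInverse (!![a, 1; 0, 0] : Matrix (Fin 2) (Fin 2) R) !![b, b ^ 2; 0, 0] := by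
  have hMB := h.fin_two_anti_triangular_mul
  have hBM : (!![b, b ^ 2; 0, 0] : Matrix (Fin 2) (Fin 2) R) * !![a, 1; 0, 0]
      = !![a * b, b; 0, 0] := by
    rw [Matrix.mul_fin_two, h.1]
    simp only [mul_zero, zero_mul, add_zero, mul_one]
  refine ⟨hMB.trans hBM.symm, ?_, ?_⟩
  · rw [hBM, Matrix.mul_fin_two, pow_two, ← mul_assoc, h.1, h.2.1]
    simp only [mul_zero, zero_mul, add_zero]
  · have hN : (!![a, 1; 0, 0] : Matrix (Fin 2) (Fin 2) R)
          - !![a, 1; 0, 0] ^ 2 * !![b, b ^ 2; 0, 0] = !![a - a ^ 2 * b, 1 - a * b; 0, 0] := by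
      rw [pow_two, mul_assoc, hMB]
      ext i j
      fin_cases i <;> fin_cases j <;> simp [pow_two, mul_assoc]
    rw [hN]
    refine h.2.2.of_norm_pow_succ_le
      ‖(!![a - a ^ 2 * b, 1 - a * b; 0, 0] : Matrix (Fin 2) (Fin 2) R)‖ fun n => ?_
    rw [Matrix.pow_succ_of_fin_two_bottom_zero, mul_comm _ ‖_‖]
    refine (norm_mul_le _ _).trans ?_
    rw [Matrix.linfty_opNorm_diagonal, pi_norm_const]

end IsGDrazinInverse

theorem stmt3_general {A : Type*} [NormedRing A]
    (a ad : A) (h : IsGDrazinInverse a ad) :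
    IsGDrazinInverse (!![a, 1; 0, 0] : Matrix (Fin 2) (Fin 2) A) !![ad, ad ^ 2; 0, 0]
      ∧ IsGDrazinInverse (!![a ^ 2, a; 0, 0] : Matrix (Fin 2) (Fin 2) A)
          !![ad ^ 2, ad ^ 3; 0, 0]
      ∧ (1 : Matrix (Fin 2) (Fin 2) A) - !![a ^ 2, a; 0, 0] * !![ad ^ 2, ad ^ 3; 0, 0]
          = !![1 - a * ad, -ad; 0, 1] := by
  have hM := h.fin_two_anti_triangular
  have hM_sq : (!![a, 1; 0, 0] : Matrix (Fin 2) (Fin 2) A) ^ 2 = !![a ^ 2, a; 0, 0] := by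
    ext i j
    fin_cases i <;> fin_cases j <;> simp [pow_two]
  have hB_sq :
      (!![ad, ad ^ 2; 0, 0] : Matrix (Fin 2) (Fin 2) A) ^ 2 = !![ad ^ 2, ad ^ 3; 0, 0] := by
    ext i j
    fin_cases i <;> fin_cases j <;> simp [pow_succ, mul_assoc]
  refine ⟨hM, hM_sq ▸ hB_sq ▸ hM.sq, ?_⟩
  rw [← hM_sq, ← hB_sq, hM.sq_mul_sq, h.fin_two_anti_triangular_mul]
  ext i j
  fin_cases i <;> fin_cases j <;> simp

theorem stmt3 {A : Type*} [NormedRing A] [NormedAlgebra ℂ A] [CompleteSpace A]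
    (a ad : A) (h : IsGDrazinInverse a ad) :
    IsGDrazinInverse (!![a, 1; 0, 0] : Matrix (Fin 2) (Fin 2) A) !![ad, ad ^ 2; 0, 0]
      ∧ IsGDrazinInverse (!![a ^ 2, a; 0, 0] : Matrix (Fin 2) (Fin 2) A)
          !![ad ^ 2, ad ^ 3; 0, 0]
      ∧ (1 : Matrix (Fin 2) (Fin 2) A) - !![a ^ 2, a; 0, 0] * !![ad ^ 2, ad ^ 3; 0, 0]
          = !![1 - a * ad, -ad; 0, 1] :=
  stmt3_general a ad h
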